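/- Let d ≥ 3, n ≥ 4, and let f be a homogeneous polynomial of degree d in n variables over ℂ of rank exactly n − 1. If f has only finitely many singular points in P^{n−1}(ℂ), then f has exactly one singular point; in this case the n − 1 linear forms in a minimal decomposition of f are linearly independent and f is projectively equivalent to x_1^d + ⋯ + x_{n−1}^d. -/
import Mathlib


open MvPolynomial

/-- The linear form with coefficient vector `v`. -/
noncomputable def linForm {n : ℕ} (v : Fin n → ℂ) : MvPolynomial (Fin n) ℂ :=
  ∑ i, C (v i) * X i

/-- `f` can be written as a sum of `r` `d`-th powers of linear forms. -/
def hasDecomp {n : ℕ} (d : ℕ) (f : MvPolynomial (Fin n) ℂ) (r : ℕ) : Prop :=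
  ∃ v : Fin r → Fin n → ℂ, f = ∑ j, (linForm (v j)) ^ d

/-- `f` has rank exactly `r` with respect to `d`-th powers of linear forms. -/
def hasRank {n : ℕ} (d : ℕ) (f : MvPolynomial (Fin n) ℂ) (r : ℕ) : Prop :=
  hasDecomp d f r ∧ ∀ s, s < r → ¬ hasDecomp d f s

lemma eval_linForm {n : ℕ} (v p : Fin n → ℂ) : eval p (linForm v) = ∑ k, v k * p k := by
  simp [linForm]

lemma pderiv_linForm {n : ℕ} (v : Fin n → ℂ) (i : Fin n) :
    pderiv i (linForm v) = C (v i) := by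
  simp [linForm, map_sum, pderiv_C_mul, Pi.single_apply]

lemma eval_pderiv_decomp {n m d : ℕ} (w : Fin m → Fin n → ℂ) (p : Fin n → ℂ) (i : Fin n) :
    eval p (pderiv i (∑ j, (linForm (w j)) ^ d)) =
      ∑ j, (d : ℂ) * (∑ k, w j k * p k) ^ (d - 1) * (w j i) := by
  rw [map_sum, map_sum]
  refine Finset.sum_congr rfl fun j _ => ?_
  rw [pderiv_pow, pderiv_linForm]
  simp [eval_linForm]

lemma sing_of_ker {n m d : ℕ} (hd : 2 ≤ d) (w : Fin m → Fin n → ℂ) (p : Fin n → ℂ)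
    (hp : ∀ j, ∑ k, w j k * p k = 0) (i : Fin n) :
    eval p (pderiv i (∑ j, (linForm (w j)) ^ d)) = 0 := by
  rw [eval_pderiv_decomp]
  refine Finset.sum_eq_zero fun j _ => ?_
  rw [hp j, zero_pow (by omega : d - 1 ≠ 0)]
  ring

lemma ker_of_sing {n m d : ℕ} (hd : 2 ≤ d) {w : Fin m → Fin n → ℂ}
    (hw : LinearIndependent ℂ w) {p : Fin n → ℂ}
    (hp : ∀ i, eval p (pderiv i (∑ j, (linForm (w j)) ^ d)) = 0) (j : Fin m) :
    ∑ k, w j k * p k = 0 := by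
  have h := Fintype.linearIndependent_iff.mp hw
    (fun j => (d : ℂ) * (∑ k, w j k * p k) ^ (d - 1)) ?_ j
  · have hd0 : (d : ℂ) ≠ 0 := by
      exact_mod_cast (by omega : (d : ℕ) ≠ 0)
    rcases mul_eq_zero.mp h with h' | h'
    · exact absurd h' hd0
    · exact pow_eq_zero_iff (by omega : d - 1 ≠ 0) |>.mp h'
  · funext i
    simp only [Finset.sum_apply, Pi.smul_apply, smul_eq_mul, Pi.zero_apply]
    rw [← hp i, eval_pderiv_decomp]

lemma mem_ker_iff {n m : ℕ} (w : Fin m → Fin n → ℂ) (p : Fin n → ℂ) :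
    p ∈ LinearMap.ker (Matrix.of w).mulVecLin ↔ ∀ j, ∑ k, w j k * p k = 0 := by
  simp [LinearMap.mem_ker, Matrix.mulVecLin_apply, Matrix.mulVec, dotProduct,
    funext_iff]

theorem stmt11 {n d : ℕ} (hn : 4 ≤ n) (hd : 3 ≤ d)
    (f : MvPolynomial (Fin n) ℂ) (hhom : f.IsHomogeneous d)
    (hrank : hasRank d f (n - 1))
    (hfin : {x : Projectivization ℂ (Fin n → ℂ) | ∀ i, eval x.rep (pderiv i f) = 0}.Finite) :
    (∃! x : Projectivization ℂ (Fin n → ℂ), ∀ i, eval x.rep (pderiv i f) = 0) ∧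
    (∀ v : Fin (n - 1) → Fin n → ℂ, f = ∑ j, (linForm (v j)) ^ d → LinearIndependent ℂ v) ∧
    ∃ A : Fin n → Fin n → ℂ, IsUnit (Matrix.of A).det ∧
      f = aeval (R := ℂ) (fun i => linForm (A i))
            ((∑ j : Fin (n - 1), (X (Fin.castLE (Nat.sub_le n 1) j)) ^ d :
              MvPolynomial (Fin n) ℂ)) := by
  -- Step 1: any (n-1)-decomposition is linearly independent.
  have key : ∀ w : Fin (n - 1) → Fin n → ℂ, f = ∑ j, (linForm (w j)) ^ d →
      LinearIndependent ℂ w := by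
    intro w hf
    by_contra hdep
    set M : Matrix (Fin (n - 1)) (Fin n) ℂ := Matrix.of w with hM
    set K := LinearMap.ker M.mulVecLin with hK
    have hrn : M.rank + Module.finrank ℂ K = n := by
      have h1 := LinearMap.finrank_range_add_finrank_ker M.mulVecLin
      rw [Module.finrank_fintype_fun_eq_card, Fintype.card_fin] at h1
      exact h1
    have hrle : M.rank ≤ n - 1 := by
      simpa using M.rank_le_card_height
    have hrne : M.rank ≠ n - 1 := by
      intro h
      apply hdep
      rw [linearIndependent_iff_card_eq_finrank_span, Fintype.card_fin]
      have h2 : M.rank = Module.finrank ℂ (Submodule.span ℂ (Set.range w)) :=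
        M.rank_eq_finrank_span_row
      exact h.symm.trans h2
    have hK2 : 2 ≤ Module.finrank ℂ K := by omega
    -- two independent vectors in K
    have : FiniteDimensional ℂ ↥K := inferInstance
    let b := Module.finBasis ℂ ↥K
    have h0 : (0 : ℕ) < Module.finrank ℂ ↥K := by omega
    have h1 : (1 : ℕ) < Module.finrank ℂ ↥K := by omega
    set P : Fin n → ℂ := ((b ⟨0, h0⟩ : ↥K) : Fin n → ℂ) with hP
    set Q : Fin n → ℂ := ((b ⟨1, h1⟩ : ↥K) : Fin n → ℂ) with hQ
    have hPK : P ∈ K := (b ⟨0, h0⟩ : ↥K).2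
    have hQK : Q ∈ K := (b ⟨1, h1⟩ : ↥K).2
    have hli : LinearIndependent ℂ (fun i : Fin (Module.finrank ℂ ↥K) =>
        ((b i : ↥K) : Fin n → ℂ)) :=
      b.linearIndependent.map' K.subtype (Submodule.ker_subtype K)
    have hpair : ∀ a c : ℂ, a • P + c • Q = 0 → a = 0 ∧ c = 0 := by
      intro a c hac
      have hinj : Function.Injective (![⟨0, h0⟩, ⟨1, h1⟩] :
          Fin 2 → Fin (Module.finrank ℂ ↥K)) := by
        intro x y hxy
        fin_cases x <;> fin_cases y <;> simp_all
      have h2 := hli.comp _ hinj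
      have h3 := Fintype.linearIndependent_iff.mp h2 ![a, c] ?_
      · exact ⟨h3 0, h3 1⟩
      · rw [Fin.sum_univ_two]
        simpa using hac
    have hne : ∀ c : ℂ, P + c • Q ≠ 0 := by
      intro c h
      have := hpair 1 c (by simpa using h)
      simp at this
    have hmem : ∀ c : ℂ, P + c • Q ∈ K := fun c =>
      K.add_mem hPK (K.smul_mem c hQK)
    have hinf : {x : Projectivization ℂ (Fin n → ℂ) |
        ∀ i, eval x.rep (pderiv i f) = 0}.Infinite := by
      apply Set.infinite_of_injective_forall_mem
        (f := fun c : ℂ => Projectivization.mk ℂ (P + c • Q) (hne c))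
      · intro c c' hcc
        rw [Projectivization.mk_eq_mk_iff'] at hcc
        obtain ⟨a, ha⟩ := hcc
        have h4 : (a - 1) • P + (a * c' - c) • Q = 0 := by
          rw [smul_add, smul_smul] at ha
          linear_combination (norm := module) ha
        obtain ⟨e1, e2⟩ := hpair _ _ h4
        linear_combination -e2 + c' * e1
      · intro c
        simp only [Set.mem_setOf_eq]
        intro i
        obtain ⟨a, ha⟩ := Projectivization.exists_smul_eq_mk_rep ℂ (P + c • Q) (hne c)
        have hrepK : (Projectivization.mk ℂ (P + c • Q) (hne c)).rep ∈ K := by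
          rw [← ha]; exact K.smul_mem _ (hmem c)
        rw [hf]
        exact sing_of_ker (d := d) (by omega) w _ ((mem_ker_iff w _).mp hrepK) i
    exact hinf hfin
  -- get the decomposition
  obtain ⟨v, hf⟩ := hrank.1
  have hv : LinearIndependent ℂ v := key v hf
  -- Step 2: the kernel has dimension 1
  set M : Matrix (Fin (n - 1)) (Fin n) ℂ := Matrix.of v with hM
  set K := LinearMap.ker M.mulVecLin with hK
  have hrn : M.rank + Module.finrank ℂ K = n := by
    have h1 := LinearMap.finrank_range_add_finrank_ker M.mulVecLin
    rw [Module.finrank_fintype_fun_eq_card, Fintype.card_fin] at h1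
    exact h1
  have hrM : M.rank = n - 1 := by
    have := hv.rank_matrix (M := M)
    rwa [Fintype.card_fin] at this
  have hK1 : Module.finrank ℂ ↥K = 1 := by omega
  obtain ⟨v0, hv0, hv0span⟩ := finrank_eq_one_iff' (K := ℂ) (V := ↥K) |>.mp hK1
  set p0 : Fin n → ℂ := (v0 : Fin n → ℂ) with hp0def
  have hp0 : p0 ≠ 0 := fun h => hv0 (Subtype.ext h)
  have hp0K : p0 ∈ K := v0.2
  refine ⟨⟨Projectivization.mk ℂ p0 hp0, ?_, ?_⟩, key, ?_⟩
  · -- the point is singular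
    intro i
    obtain ⟨a, ha⟩ := Projectivization.exists_smul_eq_mk_rep ℂ p0 hp0
    have hrepK : (Projectivization.mk ℂ p0 hp0).rep ∈ K := by
      rw [← ha]; exact K.smul_mem _ hp0K
    rw [hf]
    exact sing_of_ker (d := d) (by omega) v _ ((mem_ker_iff v _).mp hrepK) i
  · -- uniqueness
    intro y hy
    have hyK : y.rep ∈ K := by
      rw [mem_ker_iff]
      intro j
      refine ker_of_sing (d := d) (by omega) hv (fun i => ?_) j
      rw [← hf]; exact hy i
    obtain ⟨c, hc⟩ := hv0span ⟨y.rep, hyK⟩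
    have hc' : c • p0 = y.rep := congrArg Subtype.val hc
    have := (Projectivization.mk_eq_mk_iff' ℂ y.rep p0 y.rep_nonzero hp0).mpr ⟨c, hc'⟩
    rw [Projectivization.mk_rep] at this
    exact this
  · -- Step 3: projective equivalence
    have hspan : Submodule.span ℂ (Set.range v) ≠ ⊤ := by
      intro h
      have h2 : Module.finrank ℂ (Submodule.span ℂ (Set.range v)) = n := by
        rw [h, finrank_top, Module.finrank_fintype_fun_eq_card, Fintype.card_fin]
      have h3 := linearIndependent_iff_card_eq_finrank_span.mp hv
      rw [Fintype.card_fin, Set.finrank] at h3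
      omega
    obtain ⟨u, hu⟩ : ∃ u, u ∉ Submodule.span ℂ (Set.range v) := by
      by_contra h
      push_neg at h
      exact hspan (Submodule.eq_top_iff'.mpr h)
    have hcast : n - 1 + 1 = n := by omega
    set A : Fin n → Fin n → ℂ :=
      fun i => (Fin.snoc v u : Fin (n - 1 + 1) → Fin n → ℂ) (Fin.cast hcast.symm i) with hA
    have hAli : LinearIndependent ℂ A := by
      have h1 : LinearIndependent ℂ (Fin.snoc v u : Fin (n - 1 + 1) → Fin n → ℂ) :=
        linearIndependent_fin_snoc.mpr ⟨hv, hu⟩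
      exact h1.comp (Fin.cast hcast.symm) (fun x y h => by
        simpa [Fin.ext_iff] using h)
    refine ⟨A, ?_, ?_⟩
    · rw [← Matrix.isUnit_iff_isUnit_det]
      exact Matrix.linearIndependent_rows_iff_isUnit.mp hAli
    · rw [map_sum]
      simp only [map_pow, aeval_X]
      have hAj : ∀ j : Fin (n - 1), A (Fin.castLE (Nat.sub_le n 1) j) = v j := by
        intro j
        show (Fin.snoc v u : Fin (n - 1 + 1) → Fin n → ℂ)
          (Fin.cast hcast.symm (Fin.castLE (Nat.sub_le n 1) j)) = v j
        have : Fin.cast hcast.symm (Fin.castLE (Nat.sub_le n 1) j) = Fin.castSucc j := by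
          ext; simp
        rw [this, Fin.snoc_castSucc]
      rw [hf]
      exact Finset.sum_congr rfl fun j _ => by rw [hAj j]
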